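/- arXiv:1606.01793 — 2 statements merged into one kernel-verified Lean document; each statement's English description precedes it below -/
import Mathlib

section
/- Eckart–Young–Mirsky theorem for the Frobenius norm: for every real n×m matrix N with singular value decomposition N = U Σ Vᵀ and every integer 1 ≤ r ≤ min(n,m), the truncation M_r = U Σ_r Vᵀ (keeping only the r largest singular values) satisfies ‖N − M_r‖_F = min { ‖N − M‖_F : rank(M) ≤ r } = sqrt(Σ_{i>r} σᵢ(N)²). -/
open Matrix BigOperators Finset

/-- Singular values of a real `n × m` matrix, in nonincreasing order, 0-indexed:
`sv M 0 ≥ sv M 1 ≥ …` are the singular values (square roots of the eigenvalues of `Mᵀ M`). -/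
noncomputable def sv {n m : ℕ} (M : Matrix (Fin n) (Fin m) ℝ) (i : ℕ) : ℝ :=
  (((List.ofFn fun j : Fin m =>
      Real.sqrt ((Matrix.isHermitian_conjTranspose_mul_self M).eigenvalues j)).mergeSort
      (fun a b => decide (a ≥ b))).getD i 0)

/-- Trace inner product `⟨M, Y⟩ = tr (Mᵀ Y)`. -/
def ip {n m : ℕ} (M Y : Matrix (Fin n) (Fin m) ℝ) : ℝ := ∑ i, ∑ j, M i j * Y i j

/-- Frobenius norm. -/
noncomputable def fro {n m : ℕ} (M : Matrix (Fin n) (Fin m) ℝ) : ℝ :=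
  Real.sqrt (∑ i, ∑ j, M i j ^ 2)

/-- Truncated Frobenius norm `‖M‖_{F,r} = sqrt (σ₁² + ⋯ + σᵣ²)`. -/
noncomputable def truncFro {n m : ℕ} (r : ℕ) (M : Matrix (Fin n) (Fin m) ℝ) : ℝ :=
  Real.sqrt (∑ i ∈ Finset.range r, sv M i ^ 2)

/-- Dual norm with respect to the trace inner product. -/
noncomputable def dualNorm {n m : ℕ} (ν : Matrix (Fin n) (Fin m) ℝ → ℝ)
    (M : Matrix (Fin n) (Fin m) ℝ) : ℝ :=
  sSup {c : ℝ | ∃ Y, ν Y ≤ 1 ∧ c = ip M Y}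

/-- Low-rank inducing Frobenius norm `‖·‖_{F,r*}`, the dual of `‖·‖_{F,r}`. -/
noncomputable def lowRankFro {n m : ℕ} (r : ℕ) (M : Matrix (Fin n) (Fin m) ℝ) : ℝ :=
  dualNorm (truncFro r) M

/-- Ky Fan `r`-norm: sum of the `r` largest singular values. -/
noncomputable def kyFan {n m : ℕ} (r : ℕ) (M : Matrix (Fin n) (Fin m) ℝ) : ℝ :=
  ∑ i ∈ Finset.range r, sv M i

/-- Nuclear norm: sum of all singular values. -/
noncomputable def nuclear {n m : ℕ} (M : Matrix (Fin n) (Fin m) ℝ) : ℝ :=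
  ∑ i ∈ Finset.range (min n m), sv M i

/-!
Write `N = U Σ Vᵀ`. The Frobenius norm is orthogonally invariant, and replacing `M` by `Uᵀ M V`
preserves `rank M ≤ r`, so it suffices to compare `Σ` with matrices `M` of rank at most `r`.
Let `P` be the orthogonal projection onto `ker M`. Then
`‖Σ - M‖² ≥ ‖(Σ - M) P‖² = ‖Σ P‖² = ∑ⱼ σⱼ² Pⱼⱼ`, where the weights `Pⱼⱼ` lie in `[0, 1]` and sum
to `tr P = m - rank M ≥ m - r`. As `σⱼ²` is nonincreasing, such a weighted sum is smallest for the
indicator of the last `m - r` indices, where it equals `∑_{i ≥ r} σᵢ²`, the error of the truncated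
SVD.
-/

theorem sv_nonneg {n m : ℕ} (M : Matrix (Fin n) (Fin m) ℝ) (i : ℕ) : 0 ≤ sv M i := by
  rw [sv, List.getD_eq_getElem?_getD]
  cases h : (List.mergeSort _ _)[i]? with
  | none => exact le_rfl
  | some x =>
    obtain ⟨j, rfl⟩ := List.mem_ofFn.mp (List.mem_mergeSort.mp (List.mem_of_getElem? h))
    exact Real.sqrt_nonneg _

theorem sv_antitone {n m : ℕ} (M : Matrix (Fin n) (Fin m) ℝ) : Antitone (sv M) := by
  intro i j hij
  obtain rfl | hij := hij.eq_or_lt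
  · exact le_rfl
  set L := (List.ofFn fun j : Fin m =>
      Real.sqrt ((isHermitian_conjTranspose_mul_self M).eigenvalues j)).mergeSort
      (fun a b => decide (a ≥ b))
  have hL : L.Pairwise (· ≥ ·) := by
    simpa using List.pairwise_mergeSort (le := fun a b : ℝ => decide (a ≥ b))
      (fun a b c hab hbc => by simp only [decide_eq_true_eq] at *; linarith)
      (fun a b => by simpa using le_total b a) _
  by_cases hj : j < L.length
  · rw [sv, sv, List.getD_eq_getElem L 0 hj, List.getD_eq_getElem L 0 (hij.trans hj)]
    exact List.pairwise_iff_getElem.mp hL i j _ hj hij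
  · rw [sv, List.getD_eq_default L 0 (not_lt.mp hj)]
    exact sv_nonneg M i

theorem Fin.sum_ite_val_eq {M : Type*} [AddCommMonoid M] {k : ℕ} (a : ℕ) (f : Fin k → M) :
    ∑ l : Fin k, (if a = l then f l else 0) = if h : a < k then f ⟨a, h⟩ else 0 := by
  split_ifs with h
  · rw [sum_eq_single ⟨a, h⟩ (fun l _ hl => if_neg fun ha => hl (Fin.ext ha.symm)) (by simp)]
    simp
  · exact sum_eq_zero fun l _ => if_neg fun ha : a = l => h (ha ▸ l.isLt)

theorem Fin.sum_ite_le_val_eq_sum_Ico {M : Type*} [AddCommMonoid M] (g : ℕ → M) (r k : ℕ) :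
    ∑ j : Fin k, (if r ≤ (j : ℕ) then g j else 0) = ∑ i ∈ Ico r k, g i := by
  rw [Fin.sum_univ_eq_sum_range (fun i => if r ≤ i then g i else 0), ← sum_filter]
  congr 1
  ext i
  simp only [mem_filter, mem_range, mem_Ico]
  omega

theorem Finset.sum_Ico_ite_lt_eq_sum_Ico_min {M : Type*} [AddCommMonoid M] (f : ℕ → M)
    (r n m : ℕ) : ∑ i ∈ Ico r m, (if i < n then f i else 0) = ∑ i ∈ Ico r (min n m), f i := by
  rw [← sum_filter]
  congr 1
  ext i
  simp only [mem_filter, mem_Ico]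
  omega

theorem sum_Ico_le_sum_mul_of_antitone {k r : ℕ} (hrk : r ≤ k) {s : ℕ → ℝ} (hs : Antitone s)
    (hsr : 0 ≤ s r) {w : Fin k → ℝ} (hw : ∀ j, w j ∈ Set.Icc 0 1)
    (hsum : (k : ℝ) - r ≤ ∑ j, w j) :
    ∑ i ∈ Ico r k, s i ≤ ∑ j : Fin k, s j * w j := by
  -- summing these termwise inequalities leaves `s r * (∑ j, w j - (k - r)) ≥ 0` to spare
  have hterm (j : Fin k) : 0 ≤ (s j - s r) * (w j - if r ≤ (j : ℕ) then 1 else 0) := by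
    split_ifs with h
    · exact mul_nonneg_of_nonpos_of_nonpos (by linarith [hs h]) (by linarith [(hw j).2])
    · exact mul_nonneg (by linarith [hs (not_le.mp h).le]) (by linarith [(hw j).1])
  have hexpand (j : Fin k) : (s j - s r) * (w j - if r ≤ (j : ℕ) then 1 else 0) =
      s j * w j - (if r ≤ (j : ℕ) then s j else 0) - s r * w j +
        s r * (if r ≤ (j : ℕ) then 1 else 0) := by
    split_ifs <;> ring
  have hcard : ∑ j : Fin k, (if r ≤ (j : ℕ) then (1 : ℝ) else 0) = k - r := by
    rw [Fin.sum_ite_le_val_eq_sum_Ico (fun _ => 1)]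
    simp [Nat.cast_sub hrk]
  have h := sum_nonneg fun j (_ : j ∈ univ) => hterm j
  simp only [hexpand, sum_add_distrib, sum_sub_distrib, ← mul_sum,
    Fin.sum_ite_le_val_eq_sum_Ico, hcard] at h
  nlinarith [mul_nonneg hsr (sub_nonneg.mpr hsum)]

theorem Matrix.trace_transpose_mul_self_nonneg {ι κ : Type*} [Fintype ι] [Fintype κ]
    (A : Matrix ι κ ℝ) : 0 ≤ trace (Aᵀ * A) := by
  simpa [conjTranspose_eq_transpose_of_trivial] using
    (posSemidef_conjTranspose_mul_self A).trace_nonneg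

theorem Matrix.trace_transpose_mul_self_orthogonal_conj {R ι κ : Type*} [CommRing R]
    [Fintype ι] [Fintype κ] [DecidableEq ι] [DecidableEq κ] {U : Matrix ι ι R}
    {V : Matrix κ κ R} (hU : Uᵀ * U = 1) (hV : Vᵀ * V = 1) (B : Matrix ι κ R) :
    trace ((U * B * Vᵀ)ᵀ * (U * B * Vᵀ)) = trace (Bᵀ * B) :=
  calc trace ((U * B * Vᵀ)ᵀ * (U * B * Vᵀ)) = trace (V * (Bᵀ * (Uᵀ * U) * B * Vᵀ)) := by
        simp only [transpose_mul, transpose_transpose, Matrix.mul_assoc]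
    _ = trace (Bᵀ * B * (Vᵀ * V)) := by
        rw [hU, Matrix.mul_one, trace_mul_comm, Matrix.mul_assoc _ Vᵀ]
    _ = trace (Bᵀ * B) := by rw [hV, Matrix.mul_one]

theorem fro_eq_sqrt_trace {n m : ℕ} (A : Matrix (Fin n) (Fin m) ℝ) :
    fro A = √(trace (Aᵀ * A)) := by
  rw [fro, trace, sum_comm]
  simp [mul_apply, sq]

theorem fro_mul_mul_transpose {n m : ℕ} {U : Matrix (Fin n) (Fin n) ℝ}
    {V : Matrix (Fin m) (Fin m) ℝ} (hU : Uᵀ * U = 1) (hV : Vᵀ * V = 1)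
    (B : Matrix (Fin n) (Fin m) ℝ) : fro (U * B * Vᵀ) = fro B := by
  rw [fro_eq_sqrt_trace, fro_eq_sqrt_trace, trace_transpose_mul_self_orthogonal_conj hU hV]

theorem Matrix.exists_isStarProjection_mul_eq_zero {𝕜 ι κ : Type*} [RCLike 𝕜] [Fintype ι]
    [Fintype κ] [DecidableEq κ] (A : Matrix ι κ 𝕜) :
    ∃ P : Matrix κ κ 𝕜, IsStarProjection P ∧ A * P = 0 ∧
      P.trace = (Fintype.card κ : 𝕜) - A.rank := by
  let K := LinearMap.ker (toEuclideanLin A)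
  let toCLM := toEuclideanCLM (n := κ) (𝕜 := 𝕜)
  obtain ⟨P, hP⟩ : ∃ P, toCLM P = K.starProjection := EquivLike.surjective _ _
  have hPK : IsStarProjection (toCLM P) := hP ▸ isStarProjection_starProjection
  refine ⟨P, ⟨EquivLike.injective toCLM ?_, EquivLike.injective toCLM ?_⟩, ?_, ?_⟩
  · rw [map_mul, hPK.isIdempotentElem.eq]
  · rw [map_star, hPK.isSelfAdjoint.star_eq]
  · refine toLin'.injective (LinearMap.ext fun x => ?_)
    have hx : K.starProjection (WithLp.toLp 2 x) ∈ K := K.starProjection_apply_mem _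
    rw [← hP] at hx
    simpa [toLin'_mul, K, toCLM, toLpLin_apply] using hx
  · have hrank : A.rank = Module.finrank 𝕜 (LinearMap.range (toEuclideanLin A)) := by
      rw [toEuclideanLin_eq_toLin_orthonormal, ← rank_eq_finrank_range_toLin]
    have htrace : P.trace = Module.finrank 𝕜 K := by
      rw [← trace_toLin_eq P (EuclideanSpace.basisFun κ 𝕜).toBasis,
        ← toEuclideanLin_eq_toLin_orthonormal, ← coe_toEuclideanCLM_eq_toEuclideanLin, hP]
      exact LinearMap.IsProj.trace
        ⟨K.starProjection_apply_mem, fun x hx => K.starProjection_eq_self_iff.mpr hx⟩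
    rw [htrace, hrank, ← finrank_euclideanSpace (𝕜 := 𝕜),
      ← LinearMap.finrank_range_add_finrank_ker (toEuclideanLin A)]
    push_cast
    ring

section StarProjection

variable {ι κ : Type*} [Fintype ι] [Fintype κ] {P : Matrix κ κ ℝ}

theorem IsStarProjection.transpose_eq (hP : IsStarProjection P) : Pᵀ = P := by
  simpa [star_eq_conjTranspose, conjTranspose_eq_transpose_of_trivial] using
    hP.isSelfAdjoint.star_eq

theorem IsStarProjection.trace_transpose_mul_self_mul (hP : IsStarProjection P)
    (A : Matrix ι κ ℝ) : trace (Aᵀ * A * P) = trace ((A * P)ᵀ * (A * P)) := by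
  rw [transpose_mul, hP.transpose_eq, Matrix.mul_assoc P, trace_mul_comm P]
  simp only [Matrix.mul_assoc, hP.isIdempotentElem.eq]

theorem IsStarProjection.trace_transpose_mul_self_mul_le [DecidableEq κ]
    (hP : IsStarProjection P) (A : Matrix ι κ ℝ) : trace (Aᵀ * A * P) ≤ trace (Aᵀ * A) := by
  have h := trace_transpose_mul_self_nonneg (A * (1 - P))
  rw [← hP.one_sub.trace_transpose_mul_self_mul, Matrix.mul_sub, Matrix.mul_one, trace_sub] at h
  linarith

open scoped MatrixOrder in
theorem IsStarProjection.apply_self_mem_Icc [DecidableEq κ] (hP : IsStarProjection P) (j : κ) :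
    P j j ∈ Set.Icc 0 1 := by
  have h1 : 0 ≤ (1 - P) j j := (nonneg_iff_posSemidef.mp hP.one_sub.nonneg).diag_nonneg
  exact ⟨(nonneg_iff_posSemidef.mp hP.nonneg).diag_nonneg, by simpa using h1⟩

end StarProjection

def rectDiag (n m : ℕ) (d : ℕ → ℝ) : Matrix (Fin n) (Fin m) ℝ :=
  of fun i j => if (i : ℕ) = j then d i else 0

def truncate (r : ℕ) (d : ℕ → ℝ) (i : ℕ) : ℝ := if i < r then d i else 0

section RectDiag

variable {n m k : ℕ}

theorem transpose_rectDiag (d : ℕ → ℝ) : (rectDiag n m d)ᵀ = rectDiag m n d := by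
  ext i j
  by_cases h : (i : ℕ) = j <;> simp [rectDiag, h, eq_comm]

theorem rectDiag_sub (d e : ℕ → ℝ) : rectDiag n m d - rectDiag n m e = rectDiag n m (d - e) := by
  ext i j
  by_cases h : (i : ℕ) = j <;> simp [rectDiag, h]

theorem rectDiag_eq_diagonal (d : ℕ → ℝ) : rectDiag m m d = diagonal fun i : Fin m => d i := by
  ext i j
  by_cases h : i = j <;> simp [rectDiag, diagonal, h, Fin.val_inj]

theorem rectDiag_mul_rectDiag (d e : ℕ → ℝ) :
    rectDiag n k d * rectDiag k m e = rectDiag n m fun i => if i < k then d i * e i else 0 := by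
  ext i j
  simp only [rectDiag, mul_apply, of_apply, ite_mul, zero_mul]
  rw [Fin.sum_ite_val_eq]
  by_cases h : (i : ℕ) < k <;> by_cases h' : (i : ℕ) = j <;> simp [h, h']

theorem rank_rectDiag_truncate_le (d : ℕ → ℝ) : (rectDiag n m (truncate k d)).rank ≤ k := by
  have hfac : rectDiag n m (truncate k d) = rectDiag n k d * rectDiag k m 1 := by
    rw [rectDiag_mul_rectDiag]
    congr 1
    funext i
    simp [truncate]
  rw [hfac]
  exact (rank_mul_le_left _ _).trans (rank_le_width _)

theorem trace_transpose_rectDiag_mul_rectDiag_mul (d : ℕ → ℝ) (Q : Matrix (Fin m) (Fin m) ℝ) :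
    trace ((rectDiag n m d)ᵀ * rectDiag n m d * Q) =
      ∑ j : Fin m, (if (j : ℕ) < n then d j ^ 2 else 0) * Q j j := by
  rw [transpose_rectDiag, rectDiag_mul_rectDiag, rectDiag_eq_diagonal]
  simp [trace, diagonal_mul, sq]

theorem fro_rectDiag (d : ℕ → ℝ) : fro (rectDiag n m d) = √(∑ i ∈ range (min n m), d i ^ 2) := by
  rw [fro_eq_sqrt_trace, ← Matrix.mul_one ((rectDiag n m d)ᵀ * rectDiag n m d),
    trace_transpose_rectDiag_mul_rectDiag_mul]
  simp only [one_apply_eq, mul_one]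
  rw [Fin.sum_univ_eq_sum_range (fun i => if i < n then d i ^ 2 else 0), range_eq_Ico,
    sum_Ico_ite_lt_eq_sum_Ico_min, ← range_eq_Ico]

theorem fro_rectDiag_sub_rectDiag_truncate {r : ℕ} (hr : r ≤ min n m) (d : ℕ → ℝ) :
    fro (rectDiag n m d - rectDiag n m (truncate r d)) = √(∑ i ∈ Ico r (min n m), d i ^ 2) := by
  rw [rectDiag_sub, fro_rectDiag, ← sum_range_add_sum_Ico _ hr,
    sum_eq_zero fun i hi => by simp [truncate, mem_range.mp hi], zero_add]
  congr 1
  exact sum_congr rfl fun i hi => by simp [truncate, not_lt.mpr (mem_Ico.mp hi).1]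

end RectDiag

theorem sum_Ico_sq_le_trace_rectDiag_sub_of_rank_le {n m r : ℕ} {d : ℕ → ℝ} (hd : Antitone d)
    (hd0 : ∀ i, 0 ≤ d i) (hr : r ≤ m) {M : Matrix (Fin n) (Fin m) ℝ} (hM : M.rank ≤ r) :
    ∑ i ∈ Ico r (min n m), d i ^ 2 ≤ trace ((rectDiag n m d - M)ᵀ * (rectDiag n m d - M)) := by
  obtain ⟨P, hP, hMP, htrace⟩ := M.exists_isStarProjection_mul_eq_zero
  set s : ℕ → ℝ := fun i => if i < n then d i ^ 2 else 0
  have hs : Antitone s := fun i j hij => by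
    by_cases hj : j < n
    · simpa [s, hj, hij.trans_lt hj] using pow_le_pow_left₀ (hd0 j) (hd hij) 2
    · simp only [s, hj, if_false]
      split_ifs <;> positivity
  have hsum : (m : ℝ) - r ≤ ∑ j, P j j := by
    have : (M.rank : ℝ) ≤ r := by exact_mod_cast hM
    change _ ≤ trace P
    rw [htrace, Fintype.card_fin]
    linarith
  calc ∑ i ∈ Ico r (min n m), d i ^ 2 = ∑ i ∈ Ico r m, s i :=
        (sum_Ico_ite_lt_eq_sum_Ico_min _ r n m).symm
    _ ≤ ∑ j : Fin m, s j * P j j :=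
      sum_Ico_le_sum_mul_of_antitone hr hs (by positivity) hP.apply_self_mem_Icc hsum
    _ = trace ((rectDiag n m d)ᵀ * rectDiag n m d * P) :=
      (trace_transpose_rectDiag_mul_rectDiag_mul d P).symm
    _ = trace ((rectDiag n m d - M)ᵀ * (rectDiag n m d - M) * P) := by
      rw [hP.trace_transpose_mul_self_mul, hP.trace_transpose_mul_self_mul, Matrix.sub_mul, hMP,
        sub_zero]
    _ ≤ _ := hP.trace_transpose_mul_self_mul_le _

theorem eckart_young_mirsky_general {n m r : ℕ} (hr2 : r ≤ min n m)
    (N : Matrix (Fin n) (Fin m) ℝ)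
    (U : Matrix (Fin n) (Fin n) ℝ) (V : Matrix (Fin m) (Fin m) ℝ)
    (hU : U * Uᵀ = 1 ∧ Uᵀ * U = 1) (hV : V * Vᵀ = 1 ∧ Vᵀ * V = 1)
    (hN : N = U * (Matrix.of fun (i : Fin n) (j : Fin m) =>
      if (i : ℕ) = (j : ℕ) then sv N (i : ℕ) else 0) * Vᵀ)
    (Mr : Matrix (Fin n) (Fin m) ℝ)
    (hMr : Mr = U * (Matrix.of fun (i : Fin n) (j : Fin m) =>
      if (i : ℕ) = (j : ℕ) ∧ (i : ℕ) < r then sv N (i : ℕ) else 0) * Vᵀ) :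
    fro (N - Mr) = sInf {c : ℝ | ∃ M : Matrix (Fin n) (Fin m) ℝ, M.rank ≤ r ∧ c = fro (N - M)} ∧
    fro (N - Mr) = Real.sqrt (∑ i ∈ Finset.Ico r (min n m), sv N i ^ 2) := by
  set d := sv N
  replace hN : N = U * rectDiag n m d * Vᵀ := hN
  replace hMr : Mr = U * rectDiag n m (truncate r d) * Vᵀ := by
    rw [hMr]
    congr 2
    ext i j
    by_cases h : (i : ℕ) = j <;> simp [rectDiag, truncate, h, ite_and]
  have hrank : Mr.rank ≤ r := hMr ▸
    (rank_mul_le_left _ _).trans ((rank_mul_le_right _ _).trans (rank_rectDiag_truncate_le d))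
  have herr : fro (N - Mr) = √(∑ i ∈ Ico r (min n m), d i ^ 2) := by
    rw [hN, hMr, ← Matrix.sub_mul, ← Matrix.mul_sub, fro_mul_mul_transpose hU.2 hV.2,
      fro_rectDiag_sub_rectDiag_truncate hr2]
  refine ⟨Eq.symm (IsLeast.csInf_eq ⟨⟨Mr, hrank, rfl⟩, ?_⟩), herr⟩
  rintro _ ⟨M, hM, rfl⟩
  have hconj : N - M = U * (rectDiag n m d - Uᵀ * M * V) * Vᵀ := by
    rw [Matrix.mul_sub, Matrix.sub_mul, ← hN]
    simp only [← Matrix.mul_assoc, hU.1, Matrix.one_mul]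
    rw [Matrix.mul_assoc M, hV.1, Matrix.mul_one]
  rw [herr, hconj, fro_mul_mul_transpose hU.2 hV.2, fro_eq_sqrt_trace]
  exact Real.sqrt_le_sqrt (sum_Ico_sq_le_trace_rectDiag_sub_of_rank_le (sv_antitone N)
    (sv_nonneg N) (hr2.trans (min_le_right n m))
    ((rank_mul_le_left _ _).trans ((rank_mul_le_right _ _).trans hM)))

/-- Eckart–Young–Mirsky, Frobenius norm: if `N = U Σ Vᵀ` is an SVD and
`M_r = U Σ_r Vᵀ` keeps only the `r` largest singular values, then
`‖N − M_r‖_F = min {‖N − M‖_F : rank M ≤ r} = sqrt (Σ_{i>r} σᵢ(N)²)`. -/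
theorem eckart_young_mirsky {n m r : ℕ} (hr1 : 1 ≤ r) (hr2 : r ≤ min n m)
    (N : Matrix (Fin n) (Fin m) ℝ)
    (U : Matrix (Fin n) (Fin n) ℝ) (V : Matrix (Fin m) (Fin m) ℝ)
    (hU : U * Uᵀ = 1 ∧ Uᵀ * U = 1) (hV : V * Vᵀ = 1 ∧ Vᵀ * V = 1)
    (hN : N = U * (Matrix.of fun (i : Fin n) (j : Fin m) =>
      if (i : ℕ) = (j : ℕ) then sv N (i : ℕ) else 0) * Vᵀ)
    (Mr : Matrix (Fin n) (Fin m) ℝ)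
    (hMr : Mr = U * (Matrix.of fun (i : Fin n) (j : Fin m) =>
      if (i : ℕ) = (j : ℕ) ∧ (i : ℕ) < r then sv N (i : ℕ) else 0) * Vᵀ) :
    fro (N - Mr) = sInf {c : ℝ | ∃ M : Matrix (Fin n) (Fin m) ℝ, M.rank ≤ r ∧ c = fro (N - M)} ∧
    fro (N - Mr) = Real.sqrt (∑ i ∈ Finset.Ico r (min n m), sv N i ^ 2) :=
  eckart_young_mirsky_general hr2 N U V hU hV hN Mr hMr
end

section
/- For any two real n×m matrices M and N, tr(MᵀN) ≤ Σᵢ σᵢ(M) σᵢ(N), where the singular values are arranged in nonincreasing order (von Neumann trace inequality). -/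
open Matrix BigOperators Finset

/-!
Diagonalise `T† T` and `S† S` with orthonormal eigenbases `vᵢ`, `wₖ` (right singular vectors)
and put `uᵢ = σᵢ⁻¹ T vᵢ`, `u'ₖ = τₖ⁻¹ S wₖ` (left singular vectors). Expanding in these bases,
`tr (T† S) = ∑ᵢₖ σᵢ τₖ ⟪uᵢ, u'ₖ⟫ ⟪wₖ, vᵢ⟫`, and by AM-GM the real part of each product of inner
products is at most `cᵢₖ = (‖⟪uᵢ, u'ₖ⟫‖² + ‖⟪wₖ, vᵢ⟫‖²) / 2`. Bessel's inequality makes `(cᵢₖ)`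
doubly substochastic, and for nonincreasing nonnegative `σ`, `τ` Abel summation gives
`∑ᵢₖ σᵢ τₖ cᵢₖ ≤ ∑ᵢ σᵢ τᵢ`.
-/

namespace Antitone
variable {g : ℕ → ℝ}

theorem mul_sum_range_le_sum_range_mul (hg : Antitone g) {x : ℕ → ℝ} {d : ℕ}
    (hx : ∀ r ≤ d, 0 ≤ ∑ i ∈ range r, x i) :
    g d * ∑ i ∈ range d, x i ≤ ∑ i ∈ range d, g i * x i := by
  induction d with
  | zero => simp
  | succ d ih =>
    have hxd := hx (d + 1) le_rfl
    calc g (d + 1) * ∑ i ∈ range (d + 1), x i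
        ≤ g d * ∑ i ∈ range (d + 1), x i := mul_le_mul_of_nonneg_right (hg d.le_succ) hxd
      _ = g d * ∑ i ∈ range d, x i + g d * x d := by rw [sum_range_succ, mul_add]
      _ ≤ ∑ i ∈ range (d + 1), g i * x i := by
        rw [sum_range_succ]
        gcongr
        exact ih fun r hr => hx r (hr.trans d.le_succ)

theorem sum_range_mul_le_sum_range_mul (hg : Antitone g) {w v : ℕ → ℝ} {d : ℕ} (hgd : 0 ≤ g d)
    (hwv : ∀ r ≤ d, ∑ i ∈ range r, w i ≤ ∑ i ∈ range r, v i) :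
    ∑ i ∈ range d, g i * w i ≤ ∑ i ∈ range d, g i * v i := by
  have hx (r) (hr : r ≤ d) : 0 ≤ ∑ i ∈ range r, (v i - w i) := by
    rw [sum_sub_distrib]
    linarith [hwv r hr]
  have := (mul_nonneg hgd (hx d le_rfl)).trans (hg.mul_sum_range_le_sum_range_mul hx)
  simp only [mul_sub, sum_sub_distrib] at this
  linarith

theorem sum_range_mul_le_sum_range (hg : Antitone g) {c : ℕ → ℝ} {d r : ℕ} (hrd : r ≤ d)
    (hgd : 0 ≤ g d) (hc0 : ∀ k, 0 ≤ c k) (hc1 : ∀ k, c k ≤ 1)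
    (hcr : ∑ k ∈ range d, c k ≤ r) :
    ∑ k ∈ range d, g k * c k ≤ ∑ k ∈ range r, g k := by
  have hsum : ∀ q, ∑ k ∈ range q, (if k < r then (1 : ℝ) else 0) = min (q : ℝ) r := by
    intro q
    rw [sum_boole, show (range q).filter (· < r) = range (min q r) by ext; simp]
    simp
  -- The partial sums of `c` are bounded by those of the indicator of `range r`.
  calc ∑ k ∈ range d, g k * c k
      ≤ ∑ k ∈ range d, g k * if k < r then 1 else 0 := by
        refine hg.sum_range_mul_le_sum_range_mul hgd fun q hq => ?_
        rw [hsum, le_min_iff]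
        constructor
        · simpa using sum_le_sum fun k (_ : k ∈ range q) => hc1 k
        · exact (sum_le_sum_of_subset_of_nonneg (range_subset_range.2 hq)
            fun k _ _ => hc0 k).trans hcr
    _ = ∑ k ∈ range r, g k := by
        simp only [mul_ite, mul_one, mul_zero]
        rw [← sum_filter, show (range d).filter (· < r) = range r by ext; simp; omega]

theorem sum_sum_mul_le_sum_mul_of_doublySubstochastic (hg : Antitone g) {h : ℕ → ℝ}
    (hh : Antitone h) {d : ℕ} (hgd : 0 ≤ g d) (hhd : 0 ≤ h d) {C : Matrix (Fin d) (Fin d) ℝ}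
    (hC : ∀ i j, 0 ≤ C i j) (hrow : ∀ i, ∑ j, C i j ≤ 1) (hcol : ∀ j, ∑ i, C i j ≤ 1) :
    ∑ i : Fin d, ∑ j : Fin d, g i * h j * C i j ≤ ∑ i : Fin d, g i * h i := by
  set C' : ℕ → ℕ → ℝ := fun i j => if hij : i < d ∧ j < d then C ⟨i, hij.1⟩ ⟨j, hij.2⟩ else 0
  have hC' (i j : Fin d) : C' i j = C i j := by simp [C']
  have hC'0 (i j : ℕ) : 0 ≤ C' i j := by unfold C'; split_ifs <;> simp [hC]
  have hrow' (i : ℕ) : ∑ j ∈ range d, C' i j ≤ 1 := by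
    by_cases hi : i < d
    · simpa [← Fin.sum_univ_eq_sum_range (C' i), ← hC' ⟨i, hi⟩] using hrow ⟨i, hi⟩
    · simp [C', hi]
  have hcol' (j : ℕ) : ∑ i ∈ range d, C' i j ≤ 1 := by
    by_cases hj : j < d
    · simpa [← Fin.sum_univ_eq_sum_range (C' · j), ← hC' _ ⟨j, hj⟩] using hcol ⟨j, hj⟩
    · simp [C', hj]
  have hlhs : ∑ i : Fin d, ∑ j : Fin d, g i * h j * C i j =
      ∑ i ∈ range d, g i * ∑ j ∈ range d, h j * C' i j := by
    simp only [mul_sum, ← Fin.sum_univ_eq_sum_range, ← hC', mul_assoc]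
  rw [hlhs, Fin.sum_univ_eq_sum_range (fun i => g i * h i)]
  -- Abel summation in `i`; the first `r` rows have column sums `≤ 1` and total mass `≤ r`.
  refine hg.sum_range_mul_le_sum_range_mul hgd fun r hr => ?_
  rw [sum_comm]
  simp only [← mul_sum]
  refine hh.sum_range_mul_le_sum_range hr hhd (fun j => sum_nonneg fun i _ => hC'0 i j)
    (fun j => (sum_le_sum_of_subset_of_nonneg (range_subset_range.2 hr)
      fun i _ _ => hC'0 i j).trans (hcol' j)) ?_
  rw [sum_comm]
  simpa using sum_le_sum fun i (_ : i ∈ range r) => hrow' i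
end Antitone

theorem List.perm_ofFn_comp_equiv {α : Type*} {k l : ℕ} (f : Fin k → α) (e : Fin l ≃ Fin k) :
    (List.ofFn (f ∘ e)).Perm (List.ofFn f) := by
  rw [← Multiset.coe_eq_coe, ← Fin.univ_val_map, ← Fin.univ_val_map, ← Multiset.map_map]
  congr 1
  simp

theorem List.mergeSort_ofFn_comp_equiv {α : Type*} [LinearOrder α] {k l : ℕ} {f : Fin k → α}
    (hf : Antitone f) (e : Fin l ≃ Fin k) :
    (List.ofFn (f ∘ e)).mergeSort (fun a b => decide (a ≥ b)) = List.ofFn f :=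
  ((List.mergeSort_perm _ _).trans (List.perm_ofFn_comp_equiv f e)).eq_of_sortedGE
    List.sortedGE_mergeSort hf.sortedGE_ofFn

open Module RCLike
open scoped InnerProductSpace

namespace LinearMap
variable {𝕜 E F : Type*} [RCLike 𝕜] [NormedAddCommGroup E] [InnerProductSpace 𝕜 E]
  [FiniteDimensional 𝕜 E] [NormedAddCommGroup F] [InnerProductSpace 𝕜 F] [FiniteDimensional 𝕜 F]
  (T : E →ₗ[𝕜] F)

noncomputable def rightSingularVectors : OrthonormalBasis (Fin (finrank 𝕜 E)) 𝕜 E :=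
  T.isSymmetric_adjoint_comp_self.eigenvectorBasis rfl

-- Zero when `σᵢ = 0`, as `0⁻¹ = 0`.
noncomputable def leftSingularVectors (i : Fin (finrank 𝕜 E)) : F :=
  (T.singularValues i : 𝕜)⁻¹ • T (T.rightSingularVectors i)

theorem inner_apply_rightSingularVectors (i j : Fin (finrank 𝕜 E)) :
    ⟪T (T.rightSingularVectors i), T (T.rightSingularVectors j)⟫_𝕜 =
      if i = j then (T.singularValues i ^ 2 : 𝕜) else 0 := by
  rw [← adjoint_inner_right, ← comp_apply, rightSingularVectors,
    IsSymmetric.apply_eigenvectorBasis, inner_smul_right,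
    orthonormal_iff_ite.1 (OrthonormalBasis.orthonormal _), ← sq_singularValues_fin]
  split_ifs with h <;> simp [h]

theorem apply_rightSingularVectors (i : Fin (finrank 𝕜 E)) :
    T (T.rightSingularVectors i) = (T.singularValues i : 𝕜) • T.leftSingularVectors i := by
  by_cases h : T.singularValues i = 0
  · have h0 : T (T.rightSingularVectors i) = 0 := by
      rw [← inner_self_eq_zero (𝕜 := 𝕜), inner_apply_rightSingularVectors, if_pos rfl, h]
      simp
    simp [h0, h]
  · simp [leftSingularVectors, smul_smul, h]

theorem orthonormal_leftSingularVectors :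
    Orthonormal 𝕜 fun i : {i : Fin (finrank 𝕜 E) // T.singularValues i ≠ 0} =>
      T.leftSingularVectors i := by
  rw [orthonormal_iff_ite]
  rintro ⟨i, hi⟩ ⟨j, hj⟩
  simp only [leftSingularVectors, inner_smul_left, inner_smul_right, map_inv₀, conj_ofReal,
    inner_apply_rightSingularVectors, Subtype.mk.injEq]
  split_ifs with h
  · subst h
    have : (T.singularValues i : 𝕜) ≠ 0 := ofReal_ne_zero.2 hi
    field_simp
  · simp

theorem norm_leftSingularVectors_le_one (i : Fin (finrank 𝕜 E)) :
    ‖T.leftSingularVectors i‖ ≤ 1 := by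
  by_cases h : T.singularValues i = 0
  · simp [leftSingularVectors, h]
  · exact (T.orthonormal_leftSingularVectors.1 ⟨i, h⟩).le

theorem sum_norm_inner_leftSingularVectors_le (x : F) :
    ∑ i, ‖⟪T.leftSingularVectors i, x⟫_𝕜‖ ^ 2 ≤ ‖x‖ ^ 2 := by
  classical
  calc ∑ i, ‖⟪T.leftSingularVectors i, x⟫_𝕜‖ ^ 2
      = ∑ i ∈ {i : Fin (finrank 𝕜 E) | T.singularValues i ≠ 0},
          ‖⟪T.leftSingularVectors i, x⟫_𝕜‖ ^ 2 := by
        refine (sum_filter_of_ne fun i _ hi => ?_).symm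
        contrapose! hi
        simp [leftSingularVectors, hi]
    _ = ∑ i : {i : Fin (finrank 𝕜 E) // T.singularValues i ≠ 0},
          ‖⟪T.leftSingularVectors i, x⟫_𝕜‖ ^ 2 := sum_subtype _ (by simp) _
    _ ≤ ‖x‖ ^ 2 := T.orthonormal_leftSingularVectors.sum_inner_products_le x

theorem trace_adjoint_comp_eq_sum (S : E →ₗ[𝕜] F) :
    trace 𝕜 E (adjoint T ∘ₗ S) =
      ∑ i : Fin (finrank 𝕜 E), ∑ k : Fin (finrank 𝕜 E),
        (T.singularValues i * S.singularValues k : 𝕜) *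
          (⟪T.leftSingularVectors i, S.leftSingularVectors k⟫_𝕜 *
            ⟪S.rightSingularVectors k, T.rightSingularVectors i⟫_𝕜) := by
  rw [trace_eq_sum_inner _ T.rightSingularVectors]
  refine sum_congr rfl fun i _ => ?_
  have hS : S (T.rightSingularVectors i) = ∑ k, ⟪S.rightSingularVectors k,
      T.rightSingularVectors i⟫_𝕜 • S (S.rightSingularVectors k) := by
    conv_lhs => rw [← S.rightSingularVectors.sum_repr' (T.rightSingularVectors i)]
    simp only [map_sum, map_smul]
  rw [comp_apply, adjoint_inner_right, hS, inner_sum]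
  refine sum_congr rfl fun k _ => ?_
  rw [inner_smul_right, apply_rightSingularVectors, apply_rightSingularVectors, inner_smul_left,
    inner_smul_right, conj_ofReal]
  ring

noncomputable def singularOverlap (S : E →ₗ[𝕜] F) :
    Matrix (Fin (finrank 𝕜 E)) (Fin (finrank 𝕜 E)) ℝ := fun i k =>
  (‖⟪T.leftSingularVectors i, S.leftSingularVectors k⟫_𝕜‖ ^ 2 +
    ‖⟪S.rightSingularVectors k, T.rightSingularVectors i⟫_𝕜‖ ^ 2) / 2

theorem re_trace_adjoint_comp_le_sum_singularOverlap (S : E →ₗ[𝕜] F) :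
    re (trace 𝕜 E (adjoint T ∘ₗ S)) ≤ ∑ i : Fin (finrank 𝕜 E), ∑ k : Fin (finrank 𝕜 E),
      T.singularValues i * S.singularValues k * T.singularOverlap S i k := by
  rw [trace_adjoint_comp_eq_sum, map_sum]
  refine sum_le_sum fun i _ => ?_
  rw [map_sum]
  refine sum_le_sum fun k _ => ?_
  rw [← ofReal_mul, re_ofReal_mul]
  gcongr
  · exact mul_nonneg (singularValues_nonneg _ _) (singularValues_nonneg _ _)
  refine (re_le_norm _).trans ?_
  rw [norm_mul, singularOverlap]
  linarith [two_mul_le_add_sq ‖⟪T.leftSingularVectors i, S.leftSingularVectors k⟫_𝕜‖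
    ‖⟪S.rightSingularVectors k, T.rightSingularVectors i⟫_𝕜‖]

theorem sum_singularOverlap_row_le_one (S : E →ₗ[𝕜] F) (i : Fin (finrank 𝕜 E)) :
    ∑ k, T.singularOverlap S i k ≤ 1 := by
  have hu : ∑ k, ‖⟪T.leftSingularVectors i, S.leftSingularVectors k⟫_𝕜‖ ^ 2 ≤ 1 := by
    simp only [norm_inner_symm (T.leftSingularVectors i)]
    exact (S.sum_norm_inner_leftSingularVectors_le _).trans
      (pow_le_one₀ (norm_nonneg _) (T.norm_leftSingularVectors_le_one i))
  have hv : ∑ k, ‖⟪S.rightSingularVectors k, T.rightSingularVectors i⟫_𝕜‖ ^ 2 ≤ 1 :=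
    (S.rightSingularVectors.orthonormal.sum_inner_products_le _).trans (by simp)
  simp only [singularOverlap, ← sum_div, sum_add_distrib]
  linarith

theorem sum_singularOverlap_col_le_one (S : E →ₗ[𝕜] F) (k : Fin (finrank 𝕜 E)) :
    ∑ i, T.singularOverlap S i k ≤ 1 := by
  have hu : ∑ i, ‖⟪T.leftSingularVectors i, S.leftSingularVectors k⟫_𝕜‖ ^ 2 ≤ 1 :=
    (T.sum_norm_inner_leftSingularVectors_le _).trans
      (pow_le_one₀ (norm_nonneg _) (S.norm_leftSingularVectors_le_one k))
  have hv : ∑ i, ‖⟪S.rightSingularVectors k, T.rightSingularVectors i⟫_𝕜‖ ^ 2 ≤ 1 := by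
    simp only [norm_inner_symm (S.rightSingularVectors k)]
    exact (T.rightSingularVectors.orthonormal.sum_inner_products_le _).trans (by simp)
  simp only [singularOverlap, ← sum_div, sum_add_distrib]
  linarith

theorem sum_range_min_finrank_singularValues_mul (f : ℕ → ℝ) :
    ∑ i ∈ Finset.range (min (finrank 𝕜 E) (finrank 𝕜 F)), T.singularValues i * f i =
      ∑ i ∈ Finset.range (finrank 𝕜 E), T.singularValues i * f i := by
  refine sum_subset (range_subset_range.2 (min_le_left _ _)) fun i hi hmin => ?_
  simp only [Finset.mem_range, not_lt, min_le_iff] at hi hmin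
  have hF : finrank 𝕜 F ≤ i := hmin.resolve_left hi.not_ge
  rw [(T.singularValues_eq_zero_iff_le_finrank_range).2 ((Submodule.finrank_le _).trans hF),
    zero_mul]

theorem re_trace_adjoint_comp_le (S : E →ₗ[𝕜] F) :
    re (trace 𝕜 E (adjoint T ∘ₗ S)) ≤
      ∑ i ∈ Finset.range (min (finrank 𝕜 E) (finrank 𝕜 F)),
        T.singularValues i * S.singularValues i := by
  rw [sum_range_min_finrank_singularValues_mul,
    ← Fin.sum_univ_eq_sum_range (fun i => T.singularValues i * S.singularValues i)]
  refine (T.re_trace_adjoint_comp_le_sum_singularOverlap S).trans ?_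
  exact T.singularValues_antitone.sum_sum_mul_le_sum_mul_of_doublySubstochastic
    S.singularValues_antitone (singularValues_nonneg _ _) (singularValues_nonneg _ _)
    (fun i k => by unfold singularOverlap; positivity) (T.sum_singularOverlap_row_le_one S)
    (T.sum_singularOverlap_col_le_one S)

end LinearMap

theorem LinearMap.IsSymmetric.eigenvalues_congr {𝕜 E : Type*} [RCLike 𝕜] [NormedAddCommGroup E]
    [InnerProductSpace 𝕜 E] [FiniteDimensional 𝕜 E] {T S : E →ₗ[𝕜] E} (hT : T.IsSymmetric)
    (hS : S.IsSymmetric) (h : T = S) {n : ℕ} (hn : Module.finrank 𝕜 E = n) :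
    hT.eigenvalues hn = hS.eigenvalues hn := by
  subst h; rfl

namespace Matrix
variable {𝕜 ι κ : Type*} [RCLike 𝕜] [Fintype ι] [DecidableEq ι] [Fintype κ] [DecidableEq κ]

theorem toEuclideanLin_conjTranspose_mul (A : Matrix ι κ 𝕜) (B : Matrix ι κ 𝕜) :
    toEuclideanLin (Aᴴ * B) = LinearMap.adjoint (toEuclideanLin A) ∘ₗ toEuclideanLin B := by
  rw [toLpLin_mul (q := 2), toEuclideanLin_conjTranspose_eq_adjoint]

theorem sqrt_eigenvalues₀_conjTranspose_mul_self (A : Matrix ι κ 𝕜) (i : Fin (Fintype.card κ)) :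
    √((isHermitian_conjTranspose_mul_self A).eigenvalues₀ i) =
      (toEuclideanLin A).singularValues i := by
  rw [(toEuclideanLin A).singularValues_fin (finrank_euclideanSpace (𝕜 := 𝕜) (ι := κ)) i,
    IsHermitian.eigenvalues₀,
    LinearMap.IsSymmetric.eigenvalues_congr _ _ (toEuclideanLin_conjTranspose_mul A A)]

theorem trace_toEuclideanLin (A : Matrix κ κ 𝕜) :
    LinearMap.trace 𝕜 _ (toEuclideanLin A) = A.trace := by
  rw [LinearMap.trace_eq_sum_inner _ (EuclideanSpace.basisFun κ 𝕜), Matrix.trace]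
  simp [toLpLin_apply, PiLp.inner_apply]

end Matrix

theorem sv_eq_singularValues {n m : ℕ} (M : Matrix (Fin n) (Fin m) ℝ) (i : ℕ) :
    sv M i = (toEuclideanLin M).singularValues i := by
  set hA := isHermitian_conjTranspose_mul_self M
  -- `hA.eigenvalues` is the sorted `hA.eigenvalues₀` precomposed with an arbitrary bijection.
  have hsort : (List.ofFn fun j => √(hA.eigenvalues j)).mergeSort (fun a b => decide (a ≥ b)) =
      List.ofFn fun j => √(hA.eigenvalues₀ j) :=
    List.mergeSort_ofFn_comp_equiv (f := fun j => √(hA.eigenvalues₀ j))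
      (fun a b h => Real.sqrt_le_sqrt (hA.eigenvalues₀_antitone h)) _
  rw [sv, hsort, List.getD_eq_getElem?_getD, List.getElem?_ofFn]
  by_cases hi : i < Fintype.card (Fin m)
  · rw [dif_pos hi, Option.getD_some]
    exact sqrt_eigenvalues₀_conjTranspose_mul_self M ⟨i, hi⟩
  · rw [dif_neg hi, Option.getD_none]
    refine (LinearMap.singularValues_of_finrank_le _ ?_).symm
    rw [finrank_euclideanSpace_fin]
    simpa using hi

/-- von Neumann trace inequality: `tr (Mᵀ N) ≤ Σᵢ σᵢ(M) σᵢ(N)`. -/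
theorem von_neumann_trace_inequality {n m : ℕ} (M N : Matrix (Fin n) (Fin m) ℝ) :
    Matrix.trace (Mᵀ * N) ≤ ∑ i ∈ Finset.range (min n m), sv M i * sv N i := by
  have h := (toEuclideanLin M).re_trace_adjoint_comp_le (toEuclideanLin N)
  rw [← toEuclideanLin_conjTranspose_mul, trace_toEuclideanLin, finrank_euclideanSpace_fin,
    finrank_euclideanSpace_fin, RCLike.re_to_real, conjTranspose_eq_transpose_of_trivial,
    min_comm] at h
  simpa only [sv_eq_singularValues] using h
end
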